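/- Let f be a Boolean network without positive cycles whose interaction graph G(f) has an initial non-trivial strongly connected component. Then f has no fixed points. -/

import Mathlib

open scoped Classical

abbrev BNState (n : ℕ) := Fin n → Bool

def posArc {n : ℕ} (f : BNState n → BNState n) (u v : Fin n) : Prop :=
  ∃ x : BNState n, x u = false ∧ f x v = false ∧ f (Function.update x u true) v = true

def negArc {n : ℕ} (f : BNState n → BNState n) (u v : Fin n) : Prop :=
  ∃ x : BNState n, x u = false ∧ f x v = true ∧ f (Function.update x u true) v = false

def arcSign {n : ℕ} (f : BNState n → BNState n) (u v : Fin n) (s : ℤ) : Prop :=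
  (s = 1 ∧ posArc f u v) ∨ (s = -1 ∧ negArc f u v)

/-- There is a cycle of positive sign in `G(f)` avoiding the vertex set `P`. -/
def hasPosCycleOutside {n : ℕ} (f : BNState n → BNState n) (P : Set (Fin n)) : Prop :=
  ∃ (m : ℕ) (v : Fin (m+1) → Fin n) (s : Fin (m+1) → ℤ),
    Function.Injective v ∧ (∀ i, v i ∉ P) ∧
    (∀ i, arcSign f (v i) (v (i+1)) (s i)) ∧ (∏ i, s i) = 1

/-- There is a cycle (of any sign) in `G(f)` avoiding the vertex set `F`. -/
def hasCycleOutside {n : ℕ} (f : BNState n → BNState n) (F : Set (Fin n)) : Prop :=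
  ∃ (m : ℕ) (v : Fin (m+1) → Fin n) (s : Fin (m+1) → ℤ),
    Function.Injective v ∧ (∀ i, v i ∉ F) ∧
    (∀ i, arcSign f (v i) (v (i+1)) (s i))

/-- `(IC f k).1` is the set `I_k(f)` of components fixed at iteration `k`,
and `(IC f k).2` records the constant values `c_v` (arbitrary off `I_k(f)`). -/
noncomputable def IC {n : ℕ} (f : BNState n → BNState n) :
    ℕ → Set (Fin n) × (Fin n → Bool)
  | 0 => (∅, fun _ => false)
  | k+1 =>
    let I := (IC f k).1
    let c := (IC f k).2
    let g : BNState n → BNState n := fun x => f (fun u => if u ∈ I then c u else x u)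
    ({v | ∀ x y, g x v = g y v}, fun v => g (fun _ => false) v)

/-- The network `f^{I_k}` obtained from `f` by clamping the components of `I_k(f)`. -/
noncomputable def fI {n : ℕ} (f : BNState n → BNState n) (k : ℕ) :
    BNState n → BNState n :=
  fun x => f (fun u => if u ∈ (IC f k).1 then (IC f k).2 u else x u)

/-- Partial evaluation `f^u`: update only component `u`. -/
def seqStep {n : ℕ} (f : BNState n → BNState n) (u : Fin n) (x : BNState n) : BNState n :=
  Function.update x u (f x u)

/-- Sequential update `f^π = f^{π_n} ∘ ⋯ ∘ f^{π_1}`. -/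
def seqUpdate {n : ℕ} (f : BNState n → BNState n) (π : Equiv.Perm (Fin n))
    (x : BNState n) : BNState n :=
  (List.ofFn (fun i => π i)).foldl (fun y u => seqStep f u y) x

/-- Adjacency (unsigned) in the interaction graph. -/
def adjBN {n : ℕ} (g : BNState n → BNState n) (u v : Fin n) : Prop :=
  posArc g u v ∨ negArc g u v

/-- Reachability in the interaction graph. -/
def reachBN {n : ℕ} (g : BNState n → BNState n) : Fin n → Fin n → Prop :=
  Relation.ReflTransGen (adjBN g)

/-- The strongly connected component of `u`. -/
def sccBN {n : ℕ} (g : BNState n → BNState n) (u : Fin n) : Set (Fin n) :=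
  {w | reachBN g u w ∧ reachBN g w u}

/-- The SCC of `u` is non-trivial: it contains an arc. -/
def nontrivialSCC {n : ℕ} (g : BNState n → BNState n) (u : Fin n) : Prop :=
  ∃ a b : Fin n, a ∈ sccBN g u ∧ b ∈ sccBN g u ∧ adjBN g a b

/-- The SCC of `u` is initial: no arc enters it from outside. -/
def initialSCC {n : ℕ} (g : BNState n → BNState n) (u : Fin n) : Prop :=
  ∀ w v : Fin n, v ∈ sccBN g u → adjBN g w v → w ∈ sccBN g u

/-!
Let `y` be a fixed point and `S` the initial non-trivial SCC, and write `σ(true) = 1`,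
`σ(false) = -1`. Since no arc enters `S`, each `f · v` with `v ∈ S` depends only on the
coordinates in `S`, and it is not constant because `v` has an in-neighbour. Flipping the
coordinates of `y` in `S` one at a time until `f · v` changes value yields an arc `w → v` inside
`S` of sign `σ(y w) σ(y v)`. Following such arcs backwards inside the finite set `S` closes a
cycle, and along it these signs telescope to `1`: a positive cycle.
-/

open Function

theorem exists_iterate_mem_periodicPts {α : Type*} [Finite α] (φ : α → α) (x : α) :
    ∃ k, φ^[k] x ∈ periodicPts φ := by
  obtain ⟨a, b, hab, heq⟩ := Finite.exists_ne_map_eq_of_infinite (fun k : ℕ => φ^[k] x)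
  wlog hlt : a < b generalizing a b
  · exact this b a hab.symm heq.symm (lt_of_le_of_ne (not_lt.mp hlt) hab.symm)
  refine ⟨a, mk_mem_periodicPts (Nat.sub_pos_of_lt hlt) ?_⟩
  change φ^[b - a] (φ^[a] x) = φ^[a] x
  rw [← iterate_add_apply, Nat.sub_add_cancel hlt.le]
  exact heq.symm

theorem exists_cycle_of_forall_exists_pred {α : Type*} [Finite α] {S : Set α}
    {R : α → α → Prop} (hS : S.Nonempty) (hpred : ∀ v ∈ S, ∃ w ∈ S, R w v) :
    ∃ (m : ℕ) (c : Fin (m + 1) → α), Injective c ∧ ∀ i, R (c i) (c (i + 1)) := by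
  obtain ⟨u, hu⟩ := hS
  choose! φ hφS hφR using hpred
  obtain ⟨k, hk⟩ := exists_iterate_mem_periodicPts φ u
  set x := φ^[k] u
  have horbit : ∀ j, φ^[j] x ∈ S := fun j => by
    rw [← iterate_add_apply]; exact Set.MapsTo.iterate hφS (j + k) hu
  obtain ⟨m, hm⟩ : ∃ m, minimalPeriod φ x = m + 1 :=
    Nat.exists_eq_add_one.mpr (minimalPeriod_pos_of_mem_periodicPts hk)
  -- Walking the orbit of `x` backwards along `φ` traverses the arcs of `R` forwards.
  refine ⟨m, fun i => φ^[(-i : Fin (m + 1)).val] x, ?_, fun i => ?_⟩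
  · intro i i' h
    have hlt : ∀ i : Fin (m + 1), (-i).val ∈ Set.Iio (minimalPeriod φ x) := fun i => by
      rw [hm]; exact (-i).isLt
    exact neg_injective (Fin.ext (iterate_injOn_Iio_minimalPeriod (hlt i) (hlt i') h))
  · have hwrap : ((-(i + 1)).val + 1) % minimalPeriod φ x = (-i).val := by
      rw [hm, ← Nat.add_mod_mod, ← Fin.val_one', ← Fin.val_add]
      congr 2
      abel
    have := hφR _ (horbit (-(i + 1)).val)
    rwa [← iterate_succ_apply' φ, ← iterate_mod_minimalPeriod_eq, hwrap] at this

def boolSign (b : Bool) : ℤ := if b then 1 else -1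

theorem boolSign_mul_self (b : Bool) : boolSign b * boolSign b = 1 := by
  cases b <;> rfl

theorem prod_boolSign_mul_boolSign_succ {m : ℕ} (g : Fin (m + 1) → Bool) :
    ∏ i, boolSign (g i) * boolSign (g (i + 1)) = 1 := by
  rw [Finset.prod_mul_distrib, Fintype.prod_equiv (Equiv.addRight 1)
    (fun i => boolSign (g (i + 1))) (fun i => boolSign (g i)) (fun _ => rfl),
    ← Finset.prod_mul_distrib]
  simp only [boolSign_mul_self, Finset.prod_const_one]

section InteractionGraph

variable {n : ℕ} {f : BNState n → BNState n}

theorem adjBN_of_arcSign {u v : Fin n} {s : ℤ} (h : arcSign f u v s) : adjBN f u v := by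
  rcases h with ⟨-, h⟩ | ⟨-, h⟩
  exacts [Or.inl h, Or.inr h]

theorem arcSign_of_apply_update_ne {x : BNState n} {w v : Fin n}
    (h : f (update x w (!x w)) v ≠ f x v) :
    arcSign f w v (boolSign (x w) * boolSign (f x v)) := by
  cases hxw : x w
  · rw [hxw] at h
    cases hfx : f x v
    · exact Or.inl ⟨rfl, x, hxw, hfx, by simpa [hfx] using h⟩
    · exact Or.inr ⟨rfl, x, hxw, hfx, by simpa [hfx] using h⟩
  · rw [hxw] at h
    have hx : update (update x w false) w true = x := by
      rw [update_idem, ← hxw, update_eq_self]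
    cases hfx : f x v
    · refine Or.inr ⟨rfl, update x w false, update_self .., by simpa [hfx] using h, ?_⟩
      rw [hx, hfx]
    · refine Or.inl ⟨rfl, update x w false, update_self .., by simpa [hfx] using h, ?_⟩
      rw [hx, hfx]

theorem exists_arcSign_of_apply_ne {x z : BNState n} {v : Fin n} (h : f x v ≠ f z v) :
    ∃ w, x w ≠ z w ∧ arcSign f w v (boolSign (x w) * boolSign (f x v)) := by
  -- Along a path from `x` to `z` flipping one coordinate at a time, some flip changes `f · v`.
  suffices key : ∀ (D : Finset (Fin n)) (z : BNState n), (∀ w ∉ D, x w = z w) →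
      f x v ≠ f z v → ∃ w, x w ≠ z w ∧ arcSign f w v (boolSign (x w) * boolSign (f x v)) from
    key Finset.univ z (by simp) h
  intro D
  induction D using Finset.induction_on with
  | empty =>
    intro z hxz hne
    exact absurd (congrArg (f · v) (funext fun w => hxz w (Finset.notMem_empty w))) hne
  | insert a D _ ih =>
    intro z hxz hne
    by_cases hza : x a = z a
    · exact ih z (fun w hw => by by_cases hwa : w = a <;> simp_all) hne
    set z' := update z a (x a)
    have hxz' : ∀ w ∉ D, x w = z' w := fun w hw => by
      by_cases hwa : w = a <;> simp_all [z']
    by_cases h' : f x v = f z' v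
    · have hz'a : z' a = x a := update_self ..
      have hflip : f (update z' a (!z' a)) v ≠ f z' v := by
        have hz : update z' a (!x a) = z := by
          rw [update_idem, update_eq_iff]
          exact ⟨(Bool.eq_not.mpr (Ne.symm hza)).symm, fun _ _ => rfl⟩
        rw [hz'a, hz, ← h']
        exact hne.symm
      refine ⟨a, hza, ?_⟩
      simpa only [hz'a, ← h'] using arcSign_of_apply_update_ne hflip
    · obtain ⟨w, hw, harc⟩ := ih z' hxz' h'
      have hwa : w ≠ a := by rintro rfl; simp [z'] at hw
      exact ⟨w, by simpa [z', hwa] using hw, harc⟩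

theorem apply_eq_of_eqOn_of_forall_adjBN_mem {S : Set (Fin n)} {v : Fin n}
    (hS : ∀ w, adjBN f w v → w ∈ S) {x z : BNState n} (hxz : Set.EqOn x z S) :
    f x v = f z v := by
  by_contra h
  obtain ⟨w, hw, harc⟩ := exists_arcSign_of_apply_ne h
  exact hw (hxz (hS w (adjBN_of_arcSign harc)))

theorem exists_apply_ne_of_adjBN {w v : Fin n} (h : adjBN f w v) (b : Bool) :
    ∃ x, f x v ≠ b := by
  obtain ⟨x, hx⟩ : ∃ x, f x v ≠ f (update x w true) v := by
    rcases h with ⟨x, -, h₀, h₁⟩ | ⟨x, -, h₀, h₁⟩ <;> exact ⟨x, by simp [h₀, h₁]⟩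
  by_cases hb : f x v = b
  · exact ⟨update x w true, hb ▸ hx.symm⟩
  · exact ⟨x, hb⟩

theorem mem_sccBN_self (u : Fin n) : u ∈ sccBN f u :=
  ⟨.refl, .refl⟩

theorem exists_adjBN_mem_sccBN {u v : Fin n} (hnt : nontrivialSCC f u) (hv : v ∈ sccBN f u) :
    ∃ w ∈ sccBN f u, adjBN f w v := by
  obtain ⟨a, b, ha, hb, hab⟩ := hnt
  have hav : Relation.TransGen (adjBN f) a v := .head' hab (hb.2.trans hv.1)
  obtain ⟨w, haw, hwv⟩ := Relation.TransGen.tail'_iff.mp hav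
  exact ⟨w, ⟨ha.1.trans haw, Relation.ReflTransGen.head hwv hv.2⟩, hwv⟩

theorem exists_arcSign_mem_sccBN_of_fixed {y : BNState n} (hy : f y = y) {u v : Fin n}
    (hnt : nontrivialSCC f u) (hin : initialSCC f u) (hv : v ∈ sccBN f u) :
    ∃ w ∈ sccBN f u, arcSign f w v (boolSign (y w) * boolSign (y v)) := by
  have hS : ∀ w, adjBN f w v → w ∈ sccBN f u := fun w => hin w v hv
  obtain ⟨w₀, -, hw₀⟩ := exists_adjBN_mem_sccBN hnt hv
  obtain ⟨x, hx⟩ := exists_apply_ne_of_adjBN hw₀ (y v)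
  -- `f · v` only reads the SCC, so `x` may be replaced by a state agreeing with `y` off the SCC.
  set z := (sccBN f u).piecewise x y
  have hz : f z v = f x v :=
    apply_eq_of_eqOn_of_forall_adjBN_mem hS (Set.piecewise_eqOn _ _ _)
  have hyz : f y v ≠ f z v := by rw [hz, hy]; exact hx.symm
  obtain ⟨w, hw, harc⟩ := exists_arcSign_of_apply_ne hyz
  have hwS : w ∈ sccBN f u := by
    by_contra hwS
    exact hw (Set.piecewise_eq_of_notMem _ _ _ hwS).symm
  exact ⟨w, hwS, by rwa [hy] at harc⟩

end InteractionGraph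

/-- A BN without positive cycles whose interaction graph has an initial
non-trivial strongly connected component has no fixed points. -/
theorem no_fixedPoint_of_initial_nontrivial_scc {n : ℕ} (f : BNState n → BNState n)
    (hpos : ¬ hasPosCycleOutside f (∅ : Set (Fin n)))
    (u : Fin n) (hnt : nontrivialSCC f u) (hin : initialSCC f u) :
    ¬ ∃ y : BNState n, f y = y := by
  rintro ⟨y, hy⟩
  obtain ⟨m, c, hc, harc⟩ := exists_cycle_of_forall_exists_pred
    (R := fun w v => arcSign f w v (boolSign (y w) * boolSign (y v)))
    ⟨u, mem_sccBN_self u⟩ (fun v hv => exists_arcSign_mem_sccBN_of_fixed hy hnt hin hv)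
  exact hpos ⟨m, c, fun i => boolSign (y (c i)) * boolSign (y (c (i + 1))), hc,
    fun _ => Set.notMem_empty _, harc, prod_boolSign_mul_boolSign_succ (y ∘ c)⟩
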